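/- arXiv:2108.10857 — 2 statements merged into one kernel-verified Lean document; each statement's English description precedes it below -/
import Mathlib

section
/- Let N ≥ 3 be odd and κ_N = (−1)^{(N+1)/2}, and define A_N : ℂ → ℂ by A_N(z) = (1/(2π)) ∫_ℝ e^{z(1+is) + κ_N (1+is)^N} ds. Then A_N is an entire function and satisfies, for every z ∈ ℂ, that the (N−1)-st derivative of A_N at z equals −(κ_N/N) · z · A_N(z). -/
/-!
On the line `ξ = 1 + i s` one has `Re (κ_N ξ^N) ≤ -N s^(N-1) + 2^N (1 + |s|)^(N-2)`: the choice
of `κ_N` makes `κ_N i^(N-1) = -1` and `κ_N i^N` purely imaginary. Since `N - 1 ≥ 2` is even,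
every moment `∫ ξ^k e^(z ξ + κ_N ξ^N) ds` has a Gaussian majorant, locally uniform in `z`.
Differentiating under the integral sign, `z`-derivatives raise the moment index by one, so
`A^(N-1)` is the `(N-1)`-st moment. The derivative
`d/ds e^(z ξ + κ_N ξ^N) = i (z + N κ_N ξ^(N-1)) e^(z ξ + κ_N ξ^N)`
is integrable, so its integral vanishes; with `κ_N⁻¹ = κ_N` this gives the Airy equation.
-/

open MeasureTheory Complex Finset

lemma re_mul_one_add_ofReal_mul_I_pow (κ : ℂ) (N : ℕ) (s : ℝ) :
    (κ * (1 + s * I) ^ N).re = ∑ k ∈ range (N + 1), (κ * I ^ k).re * N.choose k * s ^ k := by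
  rw [add_comm, add_pow, mul_sum, re_sum]
  refine sum_congr rfl fun k _ => ?_
  have : κ * ((s * I) ^ k * 1 ^ (N - k) * N.choose k) =
      ((N.choose k * s ^ k : ℝ) : ℂ) * (κ * I ^ k) := by
    push_cast; ring
  rw [this, re_ofReal_mul]
  ring

lemma re_mul_one_add_ofReal_mul_I_pow_le (κ : ℂ) {N : ℕ} (hN : 1 ≤ N) (s : ℝ) :
    (κ * (1 + s * I) ^ N).re ≤
      (κ * I ^ N).re * s ^ N + N * (κ * I ^ (N - 1)).re * s ^ (N - 1) +
        ‖κ‖ * 2 ^ N * (1 + |s|) ^ (N - 2) := by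
  have hterm : ∀ k ∈ range (N - 1),
      (κ * I ^ k).re * N.choose k * s ^ k ≤ ‖κ‖ * N.choose k * (1 + |s|) ^ (N - 2) := by
    intro k hk
    have hk : k ≤ N - 2 := by rw [mem_range] at hk; omega
    have hmain : (κ * I ^ k).re * s ^ k ≤ ‖κ‖ * (1 + |s|) ^ (N - 2) := calc
      (κ * I ^ k).re * s ^ k ≤ |(κ * I ^ k).re| * |s| ^ k := by
        rw [← abs_pow, ← abs_mul]; exact le_abs_self _
      _ ≤ ‖κ‖ * (1 + |s|) ^ k := by
        gcongr
        · simpa using abs_re_le_norm (κ * I ^ k)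
        · linarith
      _ ≤ ‖κ‖ * (1 + |s|) ^ (N - 2) := by
        gcongr
        · linarith [abs_nonneg s]
    have hchoose : (0 : ℝ) ≤ N.choose k := by positivity
    linarith [mul_le_mul_of_nonneg_left hmain hchoose]
  have hchoose_sum : ∑ k ∈ range (N - 1), (N.choose k : ℝ) ≤ 2 ^ N := by
    calc ∑ k ∈ range (N - 1), (N.choose k : ℝ)
      _ ≤ ∑ k ∈ range (N + 1), (N.choose k : ℝ) :=
          sum_le_sum_of_subset_of_nonneg (range_subset_range.mpr (by omega))
            fun _ _ _ => by positivity
      _ = 2 ^ N := by exact_mod_cast Nat.sum_range_choose N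
  have hsplit : N + 1 = N - 1 + 1 + 1 := by omega
  have htop : N - 1 + 1 = N := by omega
  rw [re_mul_one_add_ofReal_mul_I_pow, hsplit, sum_range_succ, sum_range_succ, htop,
    Nat.choose_self, Nat.choose_symm hN, Nat.choose_one_right]
  have hrest := (sum_le_sum hterm).trans_eq (by rw [← sum_mul, ← mul_sum] :
    ∑ k ∈ range (N - 1), ‖κ‖ * N.choose k * (1 + |s|) ^ (N - 2) =
      ‖κ‖ * (∑ k ∈ range (N - 1), (N.choose k : ℝ)) * (1 + |s|) ^ (N - 2))
  have : ‖κ‖ * (∑ k ∈ range (N - 1), (N.choose k : ℝ)) * (1 + |s|) ^ (N - 2) ≤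
      ‖κ‖ * 2 ^ N * (1 + |s|) ^ (N - 2) := by gcongr
  push_cast
  linarith

lemma exists_mul_one_add_pow_le (M : ℝ) (m : ℕ) :
    ∃ C, ∀ r : ℝ, 0 ≤ r → M * (1 + r) ^ m ≤ r ^ (m + 1) + C := by
  set R := 1 + |M| * 2 ^ m
  refine ⟨|M| * (1 + R) ^ m, fun r hr => ?_⟩
  have hM : M * (1 + r) ^ m ≤ |M| * (1 + r) ^ m := by
    gcongr
    exact le_abs_self M
  rcases le_total r R with hrR | hRr
  · have : |M| * (1 + r) ^ m ≤ |M| * (1 + R) ^ m := by gcongr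
    have : 0 ≤ r ^ (m + 1) := by positivity
    linarith
  · have h1r : 1 ≤ r := le_trans (le_add_of_nonneg_right (by positivity)) hRr
    have : |M| * (1 + r) ^ m ≤ r ^ (m + 1) := calc
      |M| * (1 + r) ^ m ≤ |M| * (2 * r) ^ m := by gcongr; linarith
      _ = |M| * 2 ^ m * r ^ m := by ring
      _ ≤ r * r ^ m := by gcongr; linarith
      _ = r ^ (m + 1) := by ring
    have : 0 ≤ |M| * (1 + R) ^ m := by positivity
    linarith

def airyKappa (N : ℕ) : ℂ := (-1) ^ ((N + 1) / 2)

lemma airyKappa_mul_I_pow_pred {N : ℕ} (hN : Odd N) : airyKappa N * I ^ (N - 1) = -1 := by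
  obtain ⟨m, rfl⟩ := hN
  rw [airyKappa, show (2 * m + 1 + 1) / 2 = m + 1 by omega, show 2 * m + 1 - 1 = 2 * m by omega,
    pow_mul, I_sq, ← pow_add, Odd.neg_one_pow ⟨m, by ring⟩]

lemma airyKappa_mul_self {N : ℕ} : airyKappa N * airyKappa N = 1 := by
  rw [airyKappa, ← pow_add, Even.neg_one_pow ⟨_, rfl⟩]

lemma norm_airyKappa (N : ℕ) : ‖airyKappa N‖ = 1 := by simp [airyKappa]

lemma re_airyKappa_mul_pow_le {N : ℕ} (hN : Odd N) (s : ℝ) :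
    (airyKappa N * (1 + s * I) ^ N).re ≤ -N * s ^ (N - 1) + 2 ^ N * (1 + |s|) ^ (N - 2) := by
  have hN1 : 1 ≤ N := hN.pos
  have htop : airyKappa N * I ^ N = -I := by
    rw [show I ^ N = I ^ (N - 1) * I by rw [← pow_succ, Nat.sub_add_cancel hN1], ← mul_assoc,
      airyKappa_mul_I_pow_pred hN, neg_one_mul]
  have := re_mul_one_add_ofReal_mul_I_pow_le (airyKappa N) hN1 s
  rw [htop, airyKappa_mul_I_pow_pred hN, norm_airyKappa] at this
  simpa using this

lemma exists_add_re_airyKappa_mul_pow_le {N : ℕ} (h3N : 3 ≤ N) (hN : Odd N) (a : ℝ) :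
    ∃ C, ∀ s : ℝ, a * (1 + |s|) + (airyKappa N * (1 + s * I) ^ N).re ≤ C - s ^ 2 := by
  obtain ⟨C, hC⟩ := exists_mul_one_add_pow_le (|a| + 2 ^ N) (N - 2)
  refine ⟨C + 1, fun s => ?_⟩
  set r := |s|
  have hr : 0 ≤ r := abs_nonneg s
  have hpow : s ^ (N - 1) = r ^ (N - 2 + 1) := by
    rw [show N - 2 + 1 = N - 1 by omega, ← (Nat.Odd.sub_odd hN odd_one).pow_abs]
  have hsq : s ^ 2 ≤ r ^ (N - 2 + 1) + 1 := by
    rw [← sq_abs]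
    rcases le_total r 1 with hr1 | hr1
    · have : r ^ 2 ≤ 1 := pow_le_one₀ hr hr1
      have : 0 ≤ r ^ (N - 2 + 1) := by positivity
      linarith
    · have : r ^ 2 ≤ r ^ (N - 2 + 1) := pow_le_pow_right₀ hr1 (by omega)
      linarith
  have hlin : a * (1 + r) ≤ |a| * (1 + r) ^ (N - 2) := calc
    a * (1 + r) ≤ |a| * (1 + r) := by gcongr; exact le_abs_self a
    _ ≤ |a| * (1 + r) ^ (N - 2) :=
      mul_le_mul_of_nonneg_left (le_self_pow₀ (by linarith) (by omega)) (abs_nonneg a)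
  have hN2 : (2 : ℝ) ≤ N := by exact_mod_cast (by omega : 2 ≤ N)
  have hrpos : 0 ≤ r ^ (N - 2 + 1) := by positivity
  have hre := re_airyKappa_mul_pow_le hN s
  rw [hpow] at hre
  linarith [hC r hr, mul_le_mul_of_nonneg_right hN2 hrpos]

noncomputable def airyIntegrand (N k : ℕ) (z : ℂ) (s : ℝ) : ℂ :=
  (1 + s * I) ^ k * exp (z * (1 + s * I) + airyKappa N * (1 + s * I) ^ N)

noncomputable def airyMoment (N k : ℕ) (z : ℂ) : ℂ := ∫ s : ℝ, airyIntegrand N k z s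

lemma continuous_airyIntegrand (N k : ℕ) (z : ℂ) : Continuous (airyIntegrand N k z) := by
  unfold airyIntegrand; fun_prop

lemma norm_airyIntegrand_le (N k : ℕ) (z : ℂ) (s : ℝ) :
    ‖airyIntegrand N k z s‖ ≤
      Real.exp ((k + ‖z‖) * (1 + |s|) + (airyKappa N * (1 + s * I) ^ N).re) := by
  have hw : ‖1 + s * I‖ ≤ 1 + |s| := (norm_add_le _ _).trans (by simp)
  have hwk : ‖1 + s * I‖ ^ k ≤ Real.exp (k * (1 + |s|)) := calc
    ‖1 + s * I‖ ^ k ≤ Real.exp (1 + |s|) ^ k := by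
      gcongr
      linarith [Real.add_one_le_exp (1 + |s|)]
    _ = Real.exp (k * (1 + |s|)) := by rw [← Real.exp_nat_mul]
  have hzw : (z * (1 + s * I)).re ≤ ‖z‖ * (1 + |s|) :=
    (re_le_norm _).trans (by rw [norm_mul]; gcongr)
  rw [airyIntegrand, norm_mul, norm_pow, norm_exp, add_re, add_mul, add_assoc,
    Real.exp_add (k * _)]
  exact mul_le_mul hwk (Real.exp_le_exp.mpr (by linarith)) (Real.exp_nonneg _) (Real.exp_nonneg _)

lemma exists_norm_airyIntegrand_le {N : ℕ} (h3N : 3 ≤ N) (hN : Odd N) (k : ℕ) (c : ℝ) :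
    ∃ C, ∀ z : ℂ, ‖z‖ ≤ c → ∀ s : ℝ,
      ‖airyIntegrand N k z s‖ ≤ Real.exp (C - s ^ 2) := by
  obtain ⟨C, hC⟩ := exists_add_re_airyKappa_mul_pow_le h3N hN (k + c)
  refine ⟨C, fun z hz s => (norm_airyIntegrand_le N k z s).trans ?_⟩
  gcongr
  exact (add_le_add_left (by gcongr) _).trans (hC s)

lemma integrable_exp_sub_sq (C : ℝ) : Integrable fun s : ℝ => Real.exp (C - s ^ 2) := by
  simpa [sub_eq_add_neg, Real.exp_add] using
    (integrable_exp_neg_mul_sq one_pos).const_mul (Real.exp C)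

lemma integrable_airyIntegrand {N : ℕ} (h3N : 3 ≤ N) (hN : Odd N) (k : ℕ) (z : ℂ) :
    Integrable (airyIntegrand N k z) := by
  obtain ⟨C, hC⟩ := exists_norm_airyIntegrand_le h3N hN k ‖z‖
  exact (integrable_exp_sub_sq C).mono' (continuous_airyIntegrand N k z).aestronglyMeasurable
    (.of_forall (hC z le_rfl))

lemma hasDerivAt_airyIntegrand (N k : ℕ) (z : ℂ) (s : ℝ) :
    HasDerivAt (fun z => airyIntegrand N k z s) (airyIntegrand N (k + 1) z s) z := by
  have := (((hasDerivAt_mul_const (x := z) (1 + s * I)).add_const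
    (airyKappa N * (1 + s * I) ^ N)).cexp).const_mul ((1 + s * I) ^ k)
  simpa [airyIntegrand, pow_succ, mul_assoc, mul_comm, mul_left_comm] using this

lemma hasDerivAt_airyMoment {N : ℕ} (h3N : 3 ≤ N) (hN : Odd N) (k : ℕ) (z₀ : ℂ) :
    HasDerivAt (airyMoment N k) (airyMoment N (k + 1) z₀) z₀ := by
  obtain ⟨C, hC⟩ := exists_norm_airyIntegrand_le h3N hN (k + 1) (‖z₀‖ + 1)
  have hball : ∀ z ∈ Metric.ball z₀ 1, ‖z‖ ≤ ‖z₀‖ + 1 := fun z hz => by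
    have := norm_le_norm_add_norm_sub' z z₀
    rw [Metric.mem_ball, dist_eq_norm] at hz
    linarith
  exact (hasDerivAt_integral_of_dominated_loc_of_deriv_le (Metric.ball_mem_nhds z₀ one_pos)
    (.of_forall fun z => (continuous_airyIntegrand N k z).aestronglyMeasurable)
    (integrable_airyIntegrand h3N hN k z₀)
    (continuous_airyIntegrand N (k + 1) z₀).aestronglyMeasurable
    (.of_forall fun s z hz => hC z (hball z hz) s) (integrable_exp_sub_sq C)
    (.of_forall fun s z _ => hasDerivAt_airyIntegrand N k z s)).2

lemma hasDerivAt_airyIntegrand_zero_ofReal (N : ℕ) (z : ℂ) (s : ℝ) :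
    HasDerivAt (airyIntegrand N 0 z)
      (I * (z * airyIntegrand N 0 z s + airyKappa N * N * airyIntegrand N (N - 1) z s)) s := by
  have hw : HasDerivAt (fun s : ℝ => 1 + (s : ℂ) * I) I s := by
    simpa using ((hasDerivAt_id s).ofReal_comp.mul_const I).const_add 1
  have := ((hw.const_mul z).add ((hw.pow N).const_mul (airyKappa N))).cexp
  convert this using 1
  · ext s; simp [airyIntegrand]
  · simp only [airyIntegrand, Pi.add_apply, Pi.pow_apply]; ring

lemma airyMoment_pred {N : ℕ} (h3N : 3 ≤ N) (hN : Odd N) (z : ℂ) :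
    airyMoment N (N - 1) z = -(airyKappa N / N) * z * airyMoment N 0 z := by
  have hint := integrable_airyIntegrand h3N hN
  have hzero := integral_eq_zero_of_hasDerivAt_of_integrable
    (hasDerivAt_airyIntegrand_zero_ofReal N z)
    ((((hint 0 z).const_mul z).add ((hint (N - 1) z).const_mul (airyKappa N * N))).const_mul I)
    (hint 0 z)
  rw [integral_const_mul, integral_add ((hint 0 z).const_mul z)
    ((hint (N - 1) z).const_mul _), integral_const_mul, integral_const_mul] at hzero
  have hN0 : (N : ℂ) ≠ 0 := by exact_mod_cast (by omega : N ≠ 0)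
  have hrel : z * airyMoment N 0 z + airyKappa N * N * airyMoment N (N - 1) z = 0 :=
    (mul_eq_zero.mp hzero).resolve_left I_ne_zero
  field_simp
  linear_combination airyKappa N * hrel - N * airyMoment N (N - 1) z * airyKappa_mul_self

lemma iteratedDeriv_eq_of_hasDerivAt_succ {𝕜 F : Type*} [NontriviallyNormedField 𝕜]
    [NormedAddCommGroup F] [NormedSpace 𝕜 F] (f : ℕ → 𝕜 → F)
    (hf : ∀ k x, HasDerivAt (f k) (f (k + 1) x) x) (j : ℕ) : iteratedDeriv j (f 0) = f j := by
  induction j with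
  | zero => exact iteratedDeriv_zero
  | succ j ih => rw [iteratedDeriv_succ, ih]; exact funext fun x => (hf j x).deriv

/-- For odd `N ≥ 3` and `κ_N = (-1)^{(N+1)/2}`, the Airy-type function
`A_N(z) = (1/(2π)) ∫_ℝ exp (z (1 + i s) + κ_N (1 + i s)^N) ds` is entire and satisfies
the higher-order Airy equation `A_N^{(N-1)}(z) = -(κ_N / N) z A_N(z)`. -/
theorem stmt_3 (N : ℕ) (hN : 3 ≤ N) (hNodd : Odd N)
    (κ : ℂ) (hκ : κ = (-1 : ℂ) ^ ((N + 1) / 2))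
    (A : ℂ → ℂ)
    (hA : ∀ z : ℂ, A z = (1 / (2 * Real.pi) : ℂ) *
      ∫ s : ℝ, Complex.exp (z * (1 + (s : ℂ) * Complex.I) +
        κ * (1 + (s : ℂ) * Complex.I) ^ N)) :
    Differentiable ℂ A ∧
      ∀ z : ℂ, iteratedDeriv (N - 1) A z = -(κ / (N : ℂ)) * z * A z := by
  let f (k : ℕ) (z : ℂ) : ℂ := (1 / (2 * Real.pi) : ℂ) * airyMoment N k z
  have hAf : A = f 0 := funext fun z => by simp [f, hA, airyMoment, airyIntegrand, airyKappa, hκ]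
  have hf (k : ℕ) (z : ℂ) : HasDerivAt (f k) (f (k + 1) z) z :=
    (hasDerivAt_airyMoment hN hNodd k z).const_mul _
  refine ⟨hAf ▸ fun z => (hf 0 z).differentiableAt, fun z => ?_⟩
  rw [hAf, iteratedDeriv_eq_of_hasDerivAt_succ f hf, hκ]
  simp only [f, airyMoment_pred hN hNodd, airyKappa]
  ring
end

section
/- Fix y ∈ ℝ and let f : ℝ → ℝ be infinitely differentiable. Define a sequence of functions g_m on ℝ ∖ {y} by g₀ = f and g_{m+1}(x) = g_m'(x)/(x − y). Then for every integer k ≥ 1 and every x ≠ y, g_k(x) = (−1)^k · Σ_{ℓ=0}^{k−1} (−1)^{ℓ+1} · (k−ℓ)_{k−1} / (2^{k−ℓ−1} · ℓ!) · f^{(ℓ+1)}(x) / (x − y)^{2k−ℓ−1}, where (a)_m = a(a+1)⋯(a+m−1) denotes the ascending Pochhammer symbol. -/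
/-!
Induction on `k`. If `g_k = ∑ c_{k,ℓ} f^{(ℓ+1)}(x) (x-y)^{ℓ+1-2k}`, the product rule sends each
term to two terms of `g_{k+1}`, so the coefficients obey
`c_{k+1,ℓ+1} = c_{k,ℓ} + (ℓ+2-2k) c_{k,ℓ+1}`.
The closed form satisfies this recursion because of the Pochhammer identity
`(a)_{m+1} = (m+2-a) (a)_m + 2 (m-1+a) (a-1)_m`.
-/

open Finset Polynomial Nat
open scoped ContDiff

theorem mul_ascPochhammer_eval_add_one {S : Type*} [CommSemiring S] (n : ℕ) (a : S) :
    a * (ascPochhammer S n).eval (a + 1) = (ascPochhammer S n).eval a * (a + n) := by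
  rw [← ascPochhammer_succ_eval, ascPochhammer_succ_left]
  simp [eval_comp]

theorem ascPochhammer_succ_eval_eq {R : Type*} [CommRing R] (m : ℕ) (a : R) :
    (ascPochhammer R (m + 1)).eval a =
      (m + 2 - a) * (ascPochhammer R m).eval a +
        2 * (m - 1 + a) * (ascPochhammer R m).eval (a - 1) := by
  have shift := mul_ascPochhammer_eval_add_one m (a - 1)
  rw [sub_add_cancel] at shift
  linear_combination ascPochhammer_succ_eval m a + 2 * shift

/-- The coefficient `c_{m+1,ℓ}` of `g_{m+1}`, sign `(-1)^{m+1}` included. The power of `2` is an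
integer power so that `hadamardCoeff_succ_succ` needs no truncated subtraction and holds for
all `ℓ`. -/
noncomputable def hadamardCoeff (m ℓ : ℕ) : ℝ :=
  (-1) ^ (m + ℓ) * (ascPochhammer ℝ m).eval ((m : ℝ) + 1 - ℓ) * 2 ^ ((ℓ : ℤ) - m) / ℓ !

theorem hadamardCoeff_zero_zero : hadamardCoeff 0 0 = 1 := by
  simp [hadamardCoeff]

theorem hadamardCoeff_succ_zero (m : ℕ) :
    hadamardCoeff (m + 1) 0 = -(2 * m + 1) * hadamardCoeff m 0 := by
  have h := ascPochhammer_succ_eval_eq m ((m : ℝ) + 2)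
  simp only [hadamardCoeff, Nat.cast_zero, sub_zero, factorial_zero, cast_one,
    div_one, add_zero, zero_sub, Nat.cast_add, Nat.cast_one, zpow_neg, pow_succ]
  rw [show (m : ℝ) + 1 + 1 = m + 2 by ring, h, show (m : ℝ) + 2 - 1 = m + 1 by ring,
    zpow_add₀ two_ne_zero]
  field_simp
  ring

theorem hadamardCoeff_succ_succ (m ℓ : ℕ) :
    hadamardCoeff (m + 1) (ℓ + 1) =
      hadamardCoeff m ℓ + (ℓ - 2 * m) * hadamardCoeff m (ℓ + 1) := by
  have h := ascPochhammer_succ_eval_eq m ((m : ℝ) + 1 - ℓ)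
  simp only [hadamardCoeff, factorial_succ]
  push_cast
  rw [show (m : ℝ) + 1 + 1 - (ℓ + 1) = m + 1 - ℓ by ring,
    show (m : ℝ) + 1 - (ℓ + 1) = m + 1 - ℓ - 1 by ring, h,
    show (ℓ : ℤ) + 1 - (m + 1) = ℓ - m by ring, add_sub_right_comm (ℓ : ℤ),
    zpow_add_one₀ two_ne_zero,
    show m + 1 + (ℓ + 1) = m + ℓ + 2 by ring, show m + (ℓ + 1) = m + ℓ + 1 by ring]
  field_simp
  ring

theorem natCast_mul_hadamardCoeff_self_add_one (m : ℕ) :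
    (m : ℝ) * hadamardCoeff m (m + 1) = 0 := by
  rcases m.eq_zero_or_pos with rfl | hm
  · simp
  · simp [hadamardCoeff, ascPochhammer_ne_zero_eval_zero (S := ℝ) hm.ne']

theorem sum_hadamardCoeff_succ (m : ℕ) (G : ℕ → ℝ) :
    ∑ j ∈ range (m + 2), hadamardCoeff (m + 1) j * G j =
      ∑ ℓ ∈ range (m + 1),
        hadamardCoeff m ℓ * (G (ℓ + 1) + (ℓ - 2 * m - 1) * G ℓ) := by
  set h : ℕ → ℝ := fun ℓ ↦ (ℓ - 2 * m - 1) * hadamardCoeff m ℓ * G ℓ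
  have h_top : h (m + 1) = 0 := by
    simp only [h]
    push_cast
    linear_combination -G (m + 1) * natCast_mul_hadamardCoeff_self_add_one m
  have h_shift : ∑ ℓ ∈ range (m + 1), h ℓ = ∑ ℓ ∈ range (m + 1), h (ℓ + 1) + h 0 := by
    rw [← sum_range_succ', ← add_zero (∑ ℓ ∈ range (m + 1), h ℓ), ← h_top,
      ← sum_range_succ]
  have h_shift' : ∑ ℓ ∈ range (m + 1), hadamardCoeff m ℓ * ((ℓ - 2 * m - 1) * G ℓ) =
      ∑ ℓ ∈ range (m + 1), (ℓ - 2 * m) * hadamardCoeff m (ℓ + 1) * G (ℓ + 1) +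
        -(2 * m + 1) * hadamardCoeff m 0 * G 0 := by
    calc _ = ∑ ℓ ∈ range (m + 1), h ℓ := sum_congr rfl fun ℓ _ ↦ by simp only [h]; ring
      _ = _ := h_shift
      _ = _ := by
        congr 1
        · exact sum_congr rfl fun ℓ _ ↦ by simp only [h]; push_cast; ring
        · simp only [h]; push_cast; ring
  rw [sum_range_succ', hadamardCoeff_succ_zero]
  simp only [hadamardCoeff_succ_succ, mul_add, add_mul, sum_add_distrib, h_shift']
  ring

variable {f : ℝ → ℝ} {x y : ℝ}

noncomputable def hadamardSum (f : ℝ → ℝ) (y : ℝ) (m : ℕ) (x : ℝ) : ℝ :=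
  ∑ ℓ ∈ range (m + 1),
    hadamardCoeff m ℓ * (iteratedDeriv (ℓ + 1) f x * (x - y) ^ ((ℓ : ℤ) - 2 * m - 1))

theorem hasDerivAt_iteratedDeriv_mul_zpow (hf : ContDiff ℝ ∞ f) (hx : x ≠ y) (n : ℕ)
    (e : ℤ) :
    HasDerivAt (fun z ↦ iteratedDeriv n f z * (z - y) ^ e)
      ((x - y) * (iteratedDeriv (n + 1) f x * (x - y) ^ (e - 1) +
        e * (iteratedDeriv n f x * (x - y) ^ (e - 2)))) x := by
  have hxy : x - y ≠ 0 := sub_ne_zero.2 hx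
  have hD : HasDerivAt (iteratedDeriv n f) (iteratedDeriv (n + 1) f x) x := by
    rw [iteratedDeriv_succ]
    exact ((hf.of_le (by exact_mod_cast le_top)).differentiable_iteratedDeriv' n x).hasDerivAt
  have hP : HasDerivAt (fun z ↦ (z - y) ^ e) (e * (x - y) ^ (e - 1)) x :=
    (hasDerivAt_zpow e (x - y) (Or.inl hxy)).comp_sub_const x y
  refine (hD.mul hP).congr_deriv ?_
  rw [zpow_sub_one₀ hxy, zpow_sub₀ hxy, zpow_two]
  field_simp

theorem hasDerivAt_hadamardSum (hf : ContDiff ℝ ∞ f) (hx : x ≠ y) (m : ℕ) :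
    HasDerivAt (hadamardSum f y m) ((x - y) * hadamardSum f y (m + 1) x) x := by
  have hsum := HasDerivAt.fun_sum fun ℓ (_ : ℓ ∈ range (m + 1)) ↦
    (hasDerivAt_iteratedDeriv_mul_zpow hf hx (ℓ + 1) ((ℓ : ℤ) - 2 * m - 1)).const_mul
      (hadamardCoeff m ℓ)
  refine hsum.congr_deriv ?_
  rw [hadamardSum, sum_hadamardCoeff_succ, mul_sum]
  refine sum_congr rfl fun ℓ _ ↦ ?_
  push_cast
  rw [show (ℓ : ℤ) - 2 * m - 1 - 1 = ℓ + 1 - 2 * (m + 1) - 1 by ring,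
    show (ℓ : ℤ) - 2 * m - 1 - 2 = ℓ - 2 * (m + 1) - 1 by ring]
  ring

theorem eq_hadamardSum (hf : ContDiff ℝ ∞ f) {g : ℕ → ℝ → ℝ} (hg0 : g 0 = f)
    (hgs : ∀ m x, g (m + 1) x = deriv (g m) x / (x - y)) (m : ℕ) (hx : x ≠ y) :
    g (m + 1) x = hadamardSum f y m x := by
  induction m generalizing x with
  | zero =>
    simp [hgs, hg0, hadamardSum, hadamardCoeff_zero_zero, iteratedDeriv_one, div_eq_mul_inv]
  | succ m ih =>
    have hg : g (m + 1) =ᶠ[nhds x] hadamardSum f y m :=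
      eventually_ne_nhds hx |>.mono fun z hz ↦ ih hz
    rw [hgs, hg.deriv_eq, (hasDerivAt_hadamardSum hf hx m).deriv,
      mul_div_cancel_left₀ _ (sub_ne_zero.2 hx)]

/-- Fix `y ∈ ℝ` and a smooth `f : ℝ → ℝ`. Define `g₀ = f` and
`g_{m+1}(x) = g_m'(x)/(x - y)`. Then for `k ≥ 1` and `x ≠ y`,
`g_k(x) = (-1)^k Σ_{ℓ=0}^{k-1} (-1)^{ℓ+1} (k-ℓ)_{k-1} / (2^{k-ℓ-1} ℓ!) ·
f^{(ℓ+1)}(x)/(x-y)^{2k-ℓ-1}`, where `(a)_m` is the ascending Pochhammer symbol. -/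
theorem stmt_12 (y : ℝ) (f : ℝ → ℝ) (hf : ContDiff ℝ (⊤ : ℕ∞) f)
    (g : ℕ → ℝ → ℝ) (hg0 : g 0 = f)
    (hgs : ∀ (m : ℕ) (x : ℝ), g (m + 1) x = deriv (g m) x / (x - y)) :
    ∀ k : ℕ, 1 ≤ k → ∀ x : ℝ, x ≠ y →
      g k x = (-1 : ℝ) ^ k * ∑ ℓ ∈ Finset.range k,
        (-1 : ℝ) ^ (ℓ + 1) * (ascPochhammer ℝ (k - 1)).eval ((k : ℝ) - (ℓ : ℝ)) /
            (2 ^ (k - ℓ - 1) * (Nat.factorial ℓ : ℝ)) *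
          (iteratedDeriv (ℓ + 1) f x / (x - y) ^ (2 * k - ℓ - 1)) := by
  rintro k hk x hx
  obtain ⟨m, rfl⟩ := Nat.exists_eq_add_of_le' hk
  rw [eq_hadamardSum hf hg0 hgs m hx, hadamardSum, mul_sum]
  refine sum_congr rfl fun ℓ hℓ ↦ ?_
  have hℓm : ℓ ≤ m := Nat.lt_succ_iff.mp (mem_range.mp hℓ)
  have h2 : (2 : ℝ) ^ ((ℓ : ℤ) - m) = (2 ^ (m + 1 - ℓ - 1))⁻¹ := by
    rw [← zpow_natCast, ← zpow_neg]; congr 1; omega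
  have hxy : (x - y) ^ ((ℓ : ℤ) - 2 * m - 1) = ((x - y) ^ (2 * (m + 1) - ℓ - 1))⁻¹ := by
    rw [← zpow_natCast, ← zpow_neg]; congr 1; omega
  rw [hadamardCoeff, h2, hxy, Nat.add_sub_cancel]
  push_cast
  ring
end
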